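/- Let ω be m-restricted with SP_ω(i) = #{j > i : 0 < ω(i) - ω(j) < m}, and let 1 ≤ i, j ≤ n. If SP_ω(i) = SP_ω(j) then |ω(i) - ω(j)| < n. -/

import Mathlib

/-!
Read `SP` in value space through `σ = ω⁻¹`: `SP_ω(i)` counts the values `v ∈ (ω i - m, ω i)`
with `σ v > i`, and `m`-restrictedness says exactly that `σ v < σ (v + m)`. So if `y < x` and
`σ x < σ y`, shifting each value of `(y - m, y]` above `σ x` up by a multiple of `m` into
`(x - m, x)` is injective and stays above `σ x`; since `y` itself is such a value, the count at `y`
is smaller than the count at `x`. If `ω i ≥ ω j + n` for `1 ≤ i, j ≤ n`, apply this to `x = ω i`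
and `y = ω j + n = ω (j + n)`; the count is `n`-periodic, so `SP_ω(j) < SP_ω(i)`.
-/

/-- `SP_ω(i) = #{j > i : 0 < ω(i) - ω(j) < m}`. -/
noncomputable def SP (m : ℕ) (ω : ℤ → ℤ) (i : ℤ) : ℕ :=
  {j : ℤ | i < j ∧ 0 < ω i - ω j ∧ ω i - ω j < (m : ℤ)}.ncard

open Finset

noncomputable def valueSP (m : ℕ) (σ : ℤ → ℤ) (x : ℤ) : ℕ :=
  #{v ∈ Ioo (x - m) x | σ x < σ v}

section StepIncreasing

variable {m : ℕ} {σ : ℤ → ℤ} {x y : ℤ}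

lemma le_apply_add_mul (hσ : ∀ v, σ v < σ (v + m)) (u : ℤ) {k : ℤ} (hk : 0 ≤ k) :
    σ u ≤ σ (u + m * k) := by
  have hmono : StrictMono fun t : ℕ => σ (u + m * t) :=
    strictMono_nat_of_lt_succ fun t => by
      simpa only [Nat.cast_succ, mul_add_one, ← add_assoc] using hσ (u + m * t)
  lift k to ℕ using hk
  simpa using hmono.monotone (Nat.zero_le k)

lemma valueSP_lt_card (hm : 0 < m) (hxy : σ x < σ y) :
    valueSP m σ y < #{u ∈ Ioc (y - m) y | σ x < σ u} := by
  have hsub : insert y {v ∈ Ioo (y - m) y | σ y < σ v} ⊆ {u ∈ Ioc (y - m) y | σ x < σ u} := by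
    intro u hu
    simp only [mem_insert, mem_filter, mem_Ioo, mem_Ioc] at hu ⊢
    rcases hu with rfl | ⟨⟨h1, h2⟩, h3⟩
    · exact ⟨⟨by omega, le_rfl⟩, hxy⟩
    · exact ⟨⟨h1, h2.le⟩, hxy.trans h3⟩
  exact Nat.lt_of_succ_le ((card_insert_of_notMem (by simp)).symm.trans_le (card_le_card hsub))

lemma card_le_valueSP (hm : 0 < m) (hσ : ∀ v, σ v < σ (v + m)) (hyx : y < x) :
    #{u ∈ Ioc (y - m) y | σ x < σ u} ≤ valueSP m σ x := by
  have hm' : (0 : ℤ) < m := by exact_mod_cast hm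
  refine card_le_card_of_injOn (fun u => u + m * ((x - u) / m)) ?_ ?_
  · intro u hu
    simp only [coe_filter, mem_Ioc, Set.mem_ofPred_eq] at hu
    have hle := le_apply_add_mul hσ u (Int.ediv_nonneg (by omega) hm'.le : 0 ≤ (x - u) / m)
    have h0 := Int.emod_nonneg (x - u) hm'.ne'
    have h1 := Int.emod_lt_of_pos (x - u) hm'
    have hdef := Int.emod_def (x - u) m
    have hne : u + m * ((x - u) / m) ≠ x := fun h => by
      rw [h] at hle; exact (hu.2.trans_le hle).false
    simp only [coe_filter, mem_Ioo, Set.mem_ofPred_eq]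
    exact ⟨⟨by omega, by omega⟩, hu.2.trans_le hle⟩
  · intro u hu w hw h
    simp only [coe_filter, mem_Ioc, Set.mem_ofPred_eq] at hu hw
    have hdvd : (m : ℤ) ∣ u - w := ⟨(x - w) / m - (x - u) / m, by simp only at h; linarith⟩
    have := Int.eq_zero_of_abs_lt_dvd hdvd (abs_lt.2 ⟨by omega, by omega⟩)
    omega

lemma valueSP_lt_of_lt_of_lt (hm : 0 < m) (hσ : ∀ v, σ v < σ (v + m)) (hyx : y < x)
    (hxy : σ x < σ y) : valueSP m σ y < valueSP m σ x :=
  (valueSP_lt_card hm hxy).trans_le (card_le_valueSP hm hσ hyx)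

end StepIncreasing

lemma valueSP_add_period {n : ℤ} {σ : ℤ → ℤ} (hσ : ∀ v, σ (v + n) = σ v + n) (m : ℕ) (x : ℤ) :
    valueSP m σ (x + n) = valueSP m σ x := by
  have : Ioo (x + n - m) (x + n) = (Ioo (x - m) x).map (addRightEmbedding n) := by
    rw [map_add_right_Ioo, sub_add_eq_add_sub]
  rw [valueSP, valueSP, this, filter_map, card_map]
  congr 1
  refine filter_congr fun v _ => ?_
  simp [hσ]

lemma SP_eq_valueSP_symm (m : ℕ) (ω : ℤ ≃ ℤ) (i : ℤ) :
    SP m ω i = valueSP m ω.symm (ω i) := by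
  have hset : {j : ℤ | i < j ∧ 0 < ω i - ω j ∧ ω i - ω j < m} =
      ω ⁻¹' ↑({v ∈ Ioo (ω i - m) (ω i) | ω.symm (ω i) < ω.symm v}) := by
    ext j
    simp only [Set.mem_ofPred_eq, Set.mem_preimage, coe_filter, mem_Ioo, Equiv.symm_apply_apply]
    omega
  rw [SP, valueSP, hset, ← ω.image_symm_eq_preimage,
    Set.ncard_image_of_injective _ ω.symm.injective, Set.ncard_coe_finset]

section AffinePermutation

variable {ω : ℤ ≃ ℤ}

lemma symm_add_period {n : ℤ} (hper : ∀ x, ω (x + n) = ω x + n) (v : ℤ) :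
    ω.symm (v + n) = ω.symm v + n :=
  ω.symm_apply_eq.2 (by rw [hper, ω.apply_symm_apply])

lemma symm_lt_symm_add_of_restricted {m : ℕ} (hm : 0 < m)
    (hres : ∀ i j : ℤ, i < j → ω i - ω j ≠ m) (v : ℤ) : ω.symm v < ω.symm (v + m) := by
  refine lt_of_le_of_ne (not_lt.1 fun h => hres _ _ h ?_) fun h => ?_
  · simp
  · have := congrArg ω h
    simp only [Equiv.apply_symm_apply] at this
    omega

lemma SP_lt_SP_of_add_le {n : ℤ} {m : ℕ} (hm : 0 < m) (hper : ∀ x, ω (x + n) = ω x + n)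
    (hres : ∀ i j : ℤ, i < j → ω i - ω j ≠ m) {i j : ℤ} (hi : i ≤ n) (hj : 1 ≤ j)
    (hij : ω j + n ≤ ω i) : SP m ω j < SP m ω i := by
  have hsymm_j : ω.symm (ω j + n) = j + n := by rw [symm_add_period hper, ω.symm_apply_apply]
  have hlt : ω j + n < ω i := lt_of_le_of_ne hij fun h => by
    have := congrArg ω.symm h
    rw [hsymm_j, ω.symm_apply_apply] at this
    omega
  rw [SP_eq_valueSP_symm, SP_eq_valueSP_symm, ← valueSP_add_period (symm_add_period hper)]
  refine valueSP_lt_of_lt_of_lt hm (symm_lt_symm_add_of_restricted hm hres) hlt ?_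
  rw [hsymm_j, ω.symm_apply_apply]
  omega

end AffinePermutation

theorem stmt_13_general (n m : ℕ) (hm : 0 < m) (ω : ℤ ≃ ℤ)
    (hper : ∀ x : ℤ, ω (x + n) = ω x + n)
    (hres : ∀ i j : ℤ, i < j → ω i - ω j ≠ (m : ℤ)) :
    ∀ i j : ℤ, 1 ≤ i → i ≤ (n : ℤ) → 1 ≤ j → j ≤ (n : ℤ) →
      SP m ω i = SP m ω j → |ω i - ω j| < (n : ℤ) := by
  intro i j hi1 hin hj1 hjn hSP
  refine abs_lt.2 ⟨?_, ?_⟩ <;> by_contra! h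
  · exact (SP_lt_SP_of_add_le hm hper hres hjn hi1 (by omega)).ne hSP
  · exact (SP_lt_SP_of_add_le hm hper hres hin hj1 (by omega)).ne' hSP

/-- For an `m`-restricted affine permutation `ω` and `1 ≤ i, j ≤ n`:
if `SP_ω(i) = SP_ω(j)` then `|ω(i) - ω(j)| < n`. -/
theorem stmt_13 (n m : ℕ) (hn : 0 < n) (hm : 0 < m) (ω : ℤ ≃ ℤ)
    (hper : ∀ x : ℤ, ω (x + n) = ω x + n)
    (hsum : 2 * ∑ i ∈ Finset.Icc (1 : ℤ) (n : ℤ), ω i = n * (n + 1))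
    (hres : ∀ i j : ℤ, i < j → ω i - ω j ≠ (m : ℤ)) :
    ∀ i j : ℤ, 1 ≤ i → i ≤ (n : ℤ) → 1 ≤ j → j ≤ (n : ℤ) →
      SP m ω i = SP m ω j → |ω i - ω j| < (n : ℤ) :=
  stmt_13_general n m hm ω hper hres
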